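/- arXiv:1010.0416 — 3 statements merged into one kernel-verified Lean document; each statement's English description precedes it below -/
import Mathlib

section
/- For all integers m ≥ 0 and 0 ≤ i ≤ m, the Boros-Moll coefficients satisfy d_i(m+1) = ((4m-2i+3)(m+i+1))/(2(m+1)(m+1-i)) · d_i(m) − (i(i+1))/((m+1)(m+1-i)) · d_{i+1}(m). -/
/-!
Creative telescoping (Zeilberger). Write `d_n(m) = 4^{-m} ∑_{k ≤ m} T(m, n, k)`. For each `k ≤ m`
the summand satisfies the recurrence of the theorem up to a difference `G(k + 1) - G(k)` of an
explicit certificate `G`; this is checked by expressing every binomial coefficient as a rational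
multiple of `C(2j, j) C(m + k, k) C(k, n)` with `j = m - k`. Summing over `k`, the differences
telescope to `G(m + 1)` (as `G(0) = 0`), which cancels the extra summand `k = m + 1` of the sum
for `m + 1` because `C(2m + 2, m + 1) = 2 C(2m + 1, m + 1)`.
-/

open Finset

noncomputable def d (m : ℕ) (i : ℤ) : ℝ :=
  if 0 ≤ i ∧ i ≤ (m : ℤ) then
    ((2 : ℝ) ^ (2 * m))⁻¹ *
      ∑ k ∈ Finset.Icc i.toNat m,
        2 ^ k * (Nat.choose (2 * m - 2 * k) (m - k) : ℝ) *
          (Nat.choose (m + k) k : ℝ) * (Nat.choose k i.toNat : ℝ)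
  else 0

namespace Nat
variable {K : Type*} [Field K] [CharZero K]

theorem cast_choose_succ_succ_eq_div (N r : ℕ) :
    ((N + 1).choose (r + 1) : K) = (N + 1) / (r + 1) * N.choose r := by
  rw [div_mul_eq_mul_div, eq_div_iff (Nat.cast_add_one_ne_zero r)]
  exact_mod_cast (add_one_mul_choose_eq N r).symm

theorem cast_choose_succ_left_eq_div {N r : ℕ} (h : r ≤ N) :
    ((N + 1).choose r : K) = (N + 1) / (N + 1 - r) * N.choose r := by
  have hsub : ((N + 1 - r : ℕ) : K) = N + 1 - r := by
    rw [Nat.cast_sub (by omega)]; push_cast; ring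
  have hne : (N + 1 - r : K) ≠ 0 := by
    rw [← hsub]; exact_mod_cast (by omega : N + 1 - r ≠ 0)
  rw [div_mul_eq_mul_div, eq_div_iff hne, ← hsub]
  exact_mod_cast (choose_mul_succ_eq N r).symm.trans (mul_comm _ _)

theorem cast_choose_succ_right_eq_div {N r : ℕ} (h : r ≤ N) :
    (N.choose (r + 1) : K) = (N - r) / (r + 1) * N.choose r := by
  rw [div_mul_eq_mul_div, eq_div_iff (Nat.cast_add_one_ne_zero r), ← Nat.cast_sub h]
  exact_mod_cast (choose_succ_right_eq N r).trans (mul_comm _ _)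

theorem cast_centralBinom_succ_eq_div (j : ℕ) :
    ((2 * (j + 1)).choose (j + 1) : K) = 2 * (2 * j + 1) / (j + 1) * (2 * j).choose j := by
  rw [div_mul_eq_mul_div, eq_div_iff (Nat.cast_add_one_ne_zero j)]
  have h := succ_mul_centralBinom_succ j
  simp only [centralBinom_eq_two_mul_choose] at h
  exact_mod_cast (mul_comm _ _).trans h

end Nat

namespace BorosMoll

noncomputable def term (m n k : ℕ) : ℝ :=
  2 ^ k * ((2 * m - 2 * k).choose (m - k) : ℝ) * ((m + k).choose k : ℝ) * (k.choose n : ℝ)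

noncomputable def termSum (m n : ℕ) : ℝ :=
  ∑ k ∈ range (m + 1), term m n k

/-- The terms `k < n` vanish since `C(k, n) = 0`, so this also covers `n > m`, where `d m n = 0`. -/
theorem d_natCast (m n : ℕ) : d m n = ((2 : ℝ) ^ (2 * m))⁻¹ * termSum m n := by
  have term_eq_zero {k : ℕ} (hk : k < n) : term m n k = 0 := by
    simp [term, Nat.choose_eq_zero_of_lt hk]
  unfold d termSum
  simp only [Int.toNat_natCast, Nat.cast_nonneg, Nat.cast_le, true_and]
  split_ifs with hnm
  · congr 1
    refine sum_subset (fun k hk => by grind) fun k hk hk' => ?_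
    exact term_eq_zero (by grind)
  · rw [sum_eq_zero fun k hk => term_eq_zero (by grind), mul_zero]

noncomputable def certificate (m n k : ℕ) : ℝ :=
  2 * (m + 1) * ((n : ℝ) - k) * 2 ^ k * ((2 * (m + 1) - 2 * k).choose (m + 1 - k) : ℝ) *
    ((m + k).choose k : ℝ) * (k.choose n : ℝ)

theorem certificate_eq_zero_of_le {m n k : ℕ} (h : k ≤ n) : certificate m n k = 0 := by
  rcases h.eq_or_lt with rfl | h
  · simp [certificate]
  · simp [certificate, Nat.choose_eq_zero_of_lt h]

theorem term_succ_eq_of_le {m n k : ℕ} (hnk : n ≤ k) (hkm : k ≤ m) :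
    (m + 1) * (m + 1 - n) * term (m + 1) n k
      = 2 * (4 * m - 2 * n + 3) * (m + n + 1) * term m n k - 4 * n * (n + 1) * term m (n + 1) k
        + (certificate m n (k + 1) - certificate m n k) := by
  obtain ⟨j, rfl⟩ := Nat.exists_eq_add_of_le hkm
  simp only [term, certificate, show 2 * (k + j + 1) - 2 * k = 2 * (j + 1) by omega,
    show k + j + 1 - k = j + 1 by omega, show 2 * (k + j) - 2 * k = 2 * j by omega,
    show k + j - k = j by omega, show 2 * (k + j + 1) - 2 * (k + 1) = 2 * j by omega,
    show k + j + 1 - (k + 1) = j by omega, show k + j + 1 + k = k + j + k + 1 by omega,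
    show k + j + (k + 1) = k + j + k + 1 by omega]
  rw [Nat.cast_centralBinom_succ_eq_div,
    Nat.cast_choose_succ_left_eq_div (by omega : k ≤ k + j + k), Nat.cast_choose_succ_succ_eq_div,
    Nat.cast_choose_succ_left_eq_div hnk, Nat.cast_choose_succ_right_eq_div hnk]
  have hnk' : (n : ℝ) ≤ k := by exact_mod_cast hnk
  have hne : (k : ℝ) + 1 - n ≠ 0 := by linarith
  push_cast
  rw [show (k : ℝ) + j + k + 1 - k = k + j + 1 by ring]
  field_simp
  ring

theorem term_succ_eq {m n k : ℕ} (hkm : k ≤ m) :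
    (m + 1) * (m + 1 - n) * term (m + 1) n k
      = 2 * (4 * m - 2 * n + 3) * (m + n + 1) * term m n k - 4 * n * (n + 1) * term m (n + 1) k
        + (certificate m n (k + 1) - certificate m n k) := by
  rcases le_or_gt n k with hnk | hkn
  · exact term_succ_eq_of_le hnk hkm
  · simp [term, certificate_eq_zero_of_le hkn.le, certificate_eq_zero_of_le hkn,
      Nat.choose_eq_zero_of_lt hkn, Nat.choose_eq_zero_of_lt (hkn.trans (Nat.lt_succ_self n))]

theorem term_last_add_certificate_eq_zero (m n : ℕ) :
    (m + 1) * (m + 1 - n) * term (m + 1) n (m + 1) + certificate m n (m + 1) = 0 := by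
  have central : (2 * m + 2).choose (m + 1) = 2 * (2 * m + 1).choose (m + 1) := by
    rw [Nat.choose_succ_succ', ← Nat.choose_symm_half]; ring
  simp only [term, certificate, Nat.sub_self, Nat.choose_self,
    show m + 1 + (m + 1) = 2 * m + 2 by ring, show m + (m + 1) = 2 * m + 1 by ring, central]
  push_cast
  ring

theorem termSum_recurrence (m n : ℕ) :
    (m + 1) * (m + 1 - n) * termSum (m + 1) n
      = 2 * (4 * m - 2 * n + 3) * (m + n + 1) * termSum m n
        - 4 * n * (n + 1) * termSum m (n + 1) := by
  have boundary := term_last_add_certificate_eq_zero m n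
  have telescope := sum_range_sub (certificate m n) (m + 1)
  rw [certificate_eq_zero_of_le n.zero_le, sub_zero] at telescope
  unfold termSum
  rw [sum_range_succ, mul_add, mul_sum,
    sum_congr rfl fun k hk => term_succ_eq (Nat.lt_succ_iff.mp (mem_range.mp hk)),
    sum_add_distrib, sum_sub_distrib, telescope, ← mul_sum, ← mul_sum]
  linear_combination boundary

end BorosMoll

theorem boros_moll_recu2 (m : ℕ) (i : ℤ) (h0 : 0 ≤ i) (h1 : i ≤ (m : ℤ)) :
    d (m + 1) i = ((4 * m - 2 * i + 3) * (m + i + 1) : ℝ) / (2 * (m + 1) * (m + 1 - i)) * d m i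
      - ((i * (i + 1) : ℝ) / ((m + 1) * (m + 1 - i))) * d m (i + 1) := by
  lift i to ℕ using h0 with n
  have hnm : (n : ℝ) ≤ m := by exact_mod_cast h1
  have hne : (m : ℝ) + 1 - n ≠ 0 := by linarith
  rw [show (n : ℤ) + 1 = (n + 1 : ℕ) by push_cast; rfl, BorosMoll.d_natCast, BorosMoll.d_natCast,
    BorosMoll.d_natCast]
  have hrec := BorosMoll.termSum_recurrence m n
  push_cast
  rw [show 2 * (m + 1) = 2 * m + 2 by ring, pow_add]
  field_simp
  linear_combination hrec
end

section
/- For all integers m ≥ 2 and 0 < i < m, the ratio d_i(m+1)/d_i(m) satisfies d_i(m+1)/d_i(m) ≥ (4m² + 7m + i + 3)/(2(m+1-i)(m+1)). -/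
open Finset

/-!
Write `c m k = 2^k * C(2m-2k, m-k) * C(m+k, k)`, so that `4^m * d m i = ∑ₖ c m k * C(k, i)`. In `m`
these coefficients satisfy the first-order recurrence
`(m+1) c (m+1) (k+1) = 4(m+k+1) c m k + 2(2m-1-2k) c m (k+1)`;
summing it against `C(k, i)` and applying Pascal's rule gives
`2(m+1) d (m+1) i = 2(m+i) d m (i-1) + (4m+2i+3) d m i`.
Induction on `m` along this recurrence shows `i(m+i+1) d m i ≤ (m+1-i)(m+i) d m (i-1)`, and
inserting this bound into the recurrence once more gives the lower bound for `d (m+1) i / d m i`.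
-/

open Nat

/-- Without the indicator, truncated subtraction would make the product nonzero for `k > m`. -/
noncomputable def bmCoeff (m k : ℕ) : ℝ :=
  if k ≤ m then 2 ^ k * (centralBinom (m - k) : ℝ) * ((m + k).choose k : ℝ) else 0

lemma bmCoeff_of_lt {m k : ℕ} (h : m < k) : bmCoeff m k = 0 :=
  if_neg (not_le.mpr h)

lemma bmCoeff_of_le {m k : ℕ} (hk : k ≤ m) :
    bmCoeff m k = 2 ^ k * ((2 * m - 2 * k).choose (m - k) : ℝ) * ((m + k).choose k : ℝ) := by
  rw [bmCoeff, if_pos hk, centralBinom_eq_two_mul_choose, Nat.mul_sub]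

lemma succ_mul_bmCoeff_zero (m : ℕ) :
    ((m : ℝ) + 1) * bmCoeff (m + 1) 0 = 2 * (2 * m + 1) * bmCoeff m 0 := by
  have central := congrArg (Nat.cast : ℕ → ℝ) (succ_mul_centralBinom_succ m)
  simp only [bmCoeff, zero_le, if_true, Nat.sub_zero, Nat.choose_zero_right]
  push_cast at central ⊢
  linear_combination central

lemma succ_mul_bmCoeff_succ {m k : ℕ} (hk : k ≤ m) :
    ((m : ℝ) + 1) * bmCoeff (m + 1) (k + 1)
      = 4 * (m + k + 1) * bmCoeff m k + 2 * (2 * m - 1 - 2 * k) * bmCoeff m (k + 1) := by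
  rcases hk.eq_or_lt with rfl | hlt
  · rw [bmCoeff_of_lt (lt_add_one k)]
    simp only [bmCoeff, le_refl, if_true, Nat.sub_self, centralBinom_zero, Nat.cast_one,
      ← two_mul, ← centralBinom_eq_two_mul_choose]
    have central := congrArg (Nat.cast : ℕ → ℝ) (succ_mul_centralBinom_succ k)
    push_cast [pow_succ] at central ⊢
    linear_combination 2 ^ k * 2 * central
  · have hsub : m - k = m - (k + 1) + 1 := by omega
    have central := congrArg (Nat.cast : ℕ → ℝ) (succ_mul_centralBinom_succ (m - (k + 1)))
    have lower := congrArg (Nat.cast : ℕ → ℝ) (add_one_mul_choose_eq (m + k) k)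
    have upper := congrArg (Nat.cast : ℕ → ℝ) (choose_mul_succ_eq (m + k + 1) (k + 1))
    rw [show m + k + 1 + 1 - (k + 1) = m + 1 by omega] at upper
    simp only [bmCoeff, hk, Nat.succ_le_succ hk, Nat.succ_le_of_lt hlt, if_true,
      Nat.add_sub_add_right, hsub, show m + 1 + (k + 1) = m + k + 1 + 1 by omega, ← add_assoc]
    have hj : ((m - (k + 1) : ℕ) : ℝ) = m - k - 1 := by
      rw [Nat.cast_sub (by omega)]; push_cast; ring
    push_cast [pow_succ, hj] at central lower upper ⊢
    linear_combination -2 ^ k * 2 * (centralBinom (m - (k + 1) + 1) : ℝ) * upper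
      - 2 ^ k * 4 * (centralBinom (m - (k + 1) + 1) : ℝ) * lower
      + 2 ^ k * 2 * ((m + k + 1).choose (k + 1) : ℝ) * central

lemma succ_mul_sum_bmCoeff_mul (m : ℕ) (w : ℕ → ℝ) :
    ((m : ℝ) + 1) * ∑ k ∈ range (m + 2), bmCoeff (m + 1) k * w k
      = ∑ k ∈ range (m + 1),
          bmCoeff m k * (4 * (m + k + 1) * w (k + 1) + 2 * (2 * m + 1 - 2 * k) * w k) := by
  have shift : ∑ k ∈ range (m + 1), 2 * (2 * (m : ℝ) + 1 - 2 * k) * bmCoeff m k * w k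
      = ∑ k ∈ range (m + 1), 2 * (2 * (m : ℝ) - 1 - 2 * k) * bmCoeff m (k + 1) * w (k + 1)
        + 2 * (2 * m + 1) * bmCoeff m 0 * w 0 := by
    rw [sum_range_succ', sum_range_succ _ m, bmCoeff_of_lt (lt_add_one m)]
    push_cast
    ring_nf
  calc ((m : ℝ) + 1) * ∑ k ∈ range (m + 2), bmCoeff (m + 1) k * w k
      = ∑ k ∈ range (m + 1), ((m : ℝ) + 1) * bmCoeff (m + 1) (k + 1) * w (k + 1)
          + ((m : ℝ) + 1) * bmCoeff (m + 1) 0 * w 0 := by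
        simp only [sum_range_succ' _ (m + 1), mul_add, mul_sum, mul_assoc]
    _ = ∑ k ∈ range (m + 1), (4 * (m + k + 1) * bmCoeff m k
            + 2 * (2 * m - 1 - 2 * k) * bmCoeff m (k + 1)) * w (k + 1)
          + 2 * (2 * m + 1) * bmCoeff m 0 * w 0 := by
        rw [succ_mul_bmCoeff_zero]
        congr 1
        refine sum_congr rfl fun k hk => ?_
        rw [succ_mul_bmCoeff_succ (Nat.lt_succ_iff.mp (mem_range.mp hk))]
    _ = ∑ k ∈ range (m + 1), 4 * (m + k + 1) * bmCoeff m k * w (k + 1)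
          + ∑ k ∈ range (m + 1), 2 * (2 * (m : ℝ) + 1 - 2 * k) * bmCoeff m k * w k := by
        rw [shift, ← add_assoc, ← sum_add_distrib]
        congr 1
        exact sum_congr rfl fun k _ => by ring
    _ = _ := by
        rw [← sum_add_distrib]
        exact sum_congr rfl fun k _ => by ring

lemma d_natCast (m n : ℕ) :
    d m n = ((2 : ℝ) ^ (2 * m))⁻¹ * ∑ k ∈ range (m + 1), bmCoeff m k * (k.choose n : ℝ) := by
  rw [d, Int.toNat_natCast]
  split_ifs with h
  · congr 1
    refine sum_subset_zero_on_sdiff (fun k hk => ?_) (fun k hk => ?_) (fun k hk => ?_)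
    · simp only [mem_Icc, mem_range] at hk ⊢; omega
    · simp only [mem_sdiff, mem_Icc, mem_range] at hk
      simp [choose_eq_zero_of_lt (by omega : k < n)]
    · rw [bmCoeff_of_le (mem_Icc.mp hk).2]
  · have hn : m < n := by omega
    rw [sum_eq_zero fun k hk => ?_, mul_zero]
    rw [choose_eq_zero_of_lt (by simp only [mem_range] at hk; omega), Nat.cast_zero, mul_zero]

lemma d_of_neg (m : ℕ) {i : ℤ} (hi : i < 0) : d m i = 0 :=
  if_neg fun h => hi.not_ge h.1

lemma d_of_lt {m : ℕ} {i : ℤ} (hi : (m : ℤ) < i) : d m i = 0 :=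
  if_neg fun h => hi.not_ge h.2

lemma d_nonneg (m : ℕ) (i : ℤ) : 0 ≤ d m i := by
  unfold d
  split_ifs <;> positivity

lemma d_pos {m : ℕ} {i : ℤ} (h0 : 0 ≤ i) (hm : i ≤ m) : 0 < d m i := by
  rw [d, if_pos ⟨h0, hm⟩]
  refine mul_pos (by positivity) (sum_pos (fun k hk => ?_) ⟨i.toNat, by simp [mem_Icc]; omega⟩)
  obtain ⟨hik, hkm⟩ := mem_Icc.mp hk
  have := choose_pos (by omega : m - k ≤ 2 * m - 2 * k)
  have := choose_pos (by omega : k ≤ m + k)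
  have := choose_pos hik
  positivity

lemma two_mul_succ_mul_d_succ_natCast (m n : ℕ) :
    2 * ((m : ℝ) + 1) * d (m + 1) n
      = ((2 : ℝ) ^ (2 * m))⁻¹ * ∑ k ∈ range (m + 1), bmCoeff m k *
          (2 * (m + k + 1) * ((k + 1).choose n : ℝ) + (2 * m + 1 - 2 * k) * (k.choose n : ℝ)) := by
  rw [d_natCast, show 2 * (m + 1) = 2 * m + 2 by ring, pow_add, show m + 1 + 1 = m + 2 from rfl]
  calc _ = ((2 : ℝ) ^ (2 * m))⁻¹ / 2
        * (((m : ℝ) + 1) * ∑ k ∈ range (m + 2), bmCoeff (m + 1) k * (k.choose n : ℝ)) := by ring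
    _ = _ := by
      rw [succ_mul_sum_bmCoeff_mul, mul_sum, mul_sum]
      exact sum_congr rfl fun k _ => by ring

lemma two_mul_succ_mul_d_succ_zero (m : ℕ) :
    2 * ((m : ℝ) + 1) * d (m + 1) 0 = (4 * m + 3) * d m 0 := by
  have h := two_mul_succ_mul_d_succ_natCast m 0
  have h0 := d_natCast m 0
  rw [Nat.cast_zero] at h h0
  rw [h, h0]
  simp only [mul_sum]
  exact sum_congr rfl fun k _ => by simp only [choose_zero_right, Nat.cast_one]; ring

lemma two_mul_succ_mul_d_succ_succ (m n : ℕ) :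
    2 * ((m : ℝ) + 1) * d (m + 1) (n + 1 : ℕ)
      = 2 * (m + n + 1) * d m n + (4 * m + 2 * n + 5) * d m (n + 1 : ℕ) := by
  rw [two_mul_succ_mul_d_succ_natCast, d_natCast, d_natCast]
  simp only [mul_sum, ← sum_add_distrib]
  refine sum_congr rfl fun k _ => ?_
  have pascal := congrArg (Nat.cast : ℕ → ℝ) (choose_succ_succ' k n)
  have absorb := congrArg (Nat.cast : ℕ → ℝ) (add_one_mul_choose_eq k n)
  push_cast at pascal absorb
  linear_combination ((2 : ℝ) ^ (2 * m))⁻¹ * bmCoeff m k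
    * (2 * (m + k + n + 2) * pascal + 2 * absorb)

theorem two_mul_succ_mul_d_succ (m : ℕ) (i : ℤ) :
    2 * ((m : ℝ) + 1) * d (m + 1) i
      = 2 * (m + i) * d m (i - 1) + (4 * m + 2 * i + 3) * d m i := by
  rcases lt_or_ge i 0 with hi | hi
  · simp [d_of_neg _ hi, d_of_neg _ (by omega : i - 1 < 0)]
  lift i to ℕ using hi
  rcases i with _ | n
  · simp [two_mul_succ_mul_d_succ_zero, d_of_neg m (by norm_num : (-1 : ℤ) < 0)]
  · rw [two_mul_succ_mul_d_succ_succ, show ((n + 1 : ℕ) : ℤ) - 1 = n by omega]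
    push_cast
    ring

lemma mul_d_le_mul_d_sub_one_of_not_mem {m : ℕ} {i : ℤ} (hi : ¬ (1 ≤ i ∧ i ≤ m)) :
    i * (m + i + 1) * d m i ≤ (m + 1 - i) * (m + i) * d m (i - 1) := by
  rcases (by omega : i < 0 ∨ i = 0 ∨ i = m + 1 ∨ (m : ℤ) + 1 < i) with h | rfl | rfl | h
  · simp [d_of_neg m h, d_of_neg m (by omega : i - 1 < 0)]
  · simp [d_of_neg m (by norm_num : (-1 : ℤ) < 0)]
  · simp [d_of_lt (by omega : (m : ℤ) < m + 1)]
  · simp [d_of_lt (by omega : (m : ℤ) < i), d_of_lt (by omega : (m : ℤ) < i - 1)]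

lemma mul_d_succ_le {p : ℕ} {i : ℤ} (hi : 1 ≤ i) (hip : i ≤ p + 1)
    (ih : ∀ j : ℤ, j * (p + j + 1) * d p j ≤ (p + 1 - j) * (p + j) * d p (j - 1)) :
    i * (((p + 1 : ℕ) : ℝ) + i + 1) * d (p + 1) i
      ≤ ((p + 1 : ℕ) + 1 - i) * (((p + 1 : ℕ) : ℝ) + i) * d (p + 1) (i - 1) := by
  have hX := two_mul_succ_mul_d_succ p i
  have hY := two_mul_succ_mul_d_succ p (i - 1)
  have h := ih i
  have h' := ih (i - 1)
  have hiR : (1 : ℝ) ≤ i := by exact_mod_cast hi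
  have hipR : (i : ℝ) ≤ p + 1 := by exact_mod_cast hip
  push_cast at hY h' ⊢
  have hB : (0 : ℝ) ≤ (p + i + 2) * (4 * p + 2 * i + 3) := mul_nonneg (by linarith) (by linarith)
  have hC : (0 : ℝ) ≤ 2 * (p + i + 1) ^ 2 := by positivity
  have slack : (0 : ℝ) ≤ (p + 1 - i) * (3 * p + 2 + i) * d p (i - 1) :=
    mul_nonneg (mul_nonneg (by linarith) (by linarith)) (d_nonneg p (i - 1))
  -- After clearing the factor `2(p+1)(p+i+1)`, the recurrences and the two instances of `ih`
  -- leave exactly the nonnegative remainder `slack`.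
  refine le_of_mul_le_mul_left ?_ (by positivity : (0 : ℝ) < 2 * (p + 1) * (p + i + 1))
  linear_combination (p + i + 1) * i * (p + i + 2) * hX - (p + i + 1) ^ 2 * (p + 2 - i) * hY
    + mul_le_mul_of_nonneg_left h hB + mul_le_mul_of_nonneg_left h' hC + slack

theorem mul_d_le_mul_d_sub_one (m : ℕ) (i : ℤ) :
    i * (m + i + 1) * d m i ≤ (m + 1 - i) * (m + i) * d m (i - 1) := by
  induction m generalizing i with
  | zero => exact mul_d_le_mul_d_sub_one_of_not_mem (by omega)
  | succ p ih =>
    by_cases hi : 1 ≤ i ∧ i ≤ (p + 1 : ℕ)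
    · exact mul_d_succ_le hi.1 (by exact_mod_cast hi.2) ih
    · exact mul_d_le_mul_d_sub_one_of_not_mem hi

theorem kauers_paule_lower_bound_general (m : ℕ) (i : ℤ) (h0 : 0 < i) (h1 : i < (m : ℤ)) :
    (4 * m ^ 2 + 7 * m + i + 3 : ℝ) / (2 * (m + 1 - i) * (m + 1)) ≤ d (m + 1) i / d m i := by
  have hi : (i : ℝ) < m := by exact_mod_cast h1
  rw [div_le_div_iff₀ (mul_pos (by linarith) (by positivity)) (d_pos h0.le h1.le)]
  linear_combination (i - m - 1) * two_mul_succ_mul_d_succ m i + 2 * mul_d_le_mul_d_sub_one m i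

theorem kauers_paule_lower_bound (m : ℕ) (i : ℤ) (hm : 2 ≤ m) (h0 : 0 < i) (h1 : i < (m : ℤ)) :
    (4 * m ^ 2 + 7 * m + i + 3 : ℝ) / (2 * (m + 1 - i) * (m + 1)) ≤ d (m + 1) i / d m i :=
  kauers_paule_lower_bound_general m i h0 h1
end

section
/- For all integers m ≥ 2 and 1 ≤ i ≤ m−1, the recurrence d_{i+1}(m) = ((4m−2i+3)(m+i+1)/(2i(i+1))) · d_i(m) − ((m+1−i)(m+1)/(i(i+1))) · d_i(m+1) holds. -/
/-!
Creative telescoping in the summation index `k`. Each of `bmTerm m (i+1) k`, `bmTerm (m+1) i k`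
and `bmTerm m i (k-1)` is a rational multiple of `bmTerm m i k`, so with the certificate
`bmCert m i (k+1) = (m+k+1) * bmTerm m i k` the identity

  `bmTerm m (i+1) k - A * bmTerm m i k + B/4 * bmTerm (m+1) i k`
  `  = (m+1)/(i(i+1)) * (bmCert m i k - bmCert m i (k+1))`

(`A`, `B` the coefficients of the recurrence) is an identity of rational functions. Summing over
`0 ≤ k ≤ m` leaves `-bmCert m i (m+1)`, which cancels the summand `k = m+1` of `d_i(m+1)`, the one
without a counterpart in `d_i(m)`.
-/

open Finset

lemma Nat.cast_choose_succ_right_mul {R : Type*} [CommRing R] (n k : ℕ) :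
    (n.choose (k + 1) : R) * (k + 1) = n.choose k * (n - k) := by
  rcases le_or_gt k n with hk | hk
  · have h := congrArg (Nat.cast (R := R)) (Nat.choose_succ_right_eq n k)
    push_cast [Nat.cast_sub hk] at h
    exact h
  · simp [Nat.choose_eq_zero_of_lt hk, Nat.choose_eq_zero_of_lt (hk.trans (Nat.lt_succ_self k))]

lemma Nat.cast_choose_mul_succ {R : Type*} [CommRing R] (n k : ℕ) :
    (n.choose k : R) * (n + 1) = (n + 1).choose k * (n + 1 - k) := by
  rcases le_or_gt k (n + 1) with hk | hk
  · have h := congrArg (Nat.cast (R := R)) (Nat.choose_mul_succ_eq n k)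
    push_cast [Nat.cast_sub hk] at h
    exact h
  · simp [Nat.choose_eq_zero_of_lt hk, Nat.choose_eq_zero_of_lt (Nat.lt_of_succ_lt hk)]

lemma Nat.cast_succ_mul_centralBinom_succ {R : Type*} [CommSemiring R] (n : ℕ) :
    ((n : R) + 1) * ((n + 1).centralBinom : R) = 2 * (2 * n + 1) * (n.centralBinom : R) := by
  exact_mod_cast congrArg (Nat.cast (R := R)) (Nat.succ_mul_centralBinom_succ n)

noncomputable def bmTerm (m i k : ℕ) : ℝ :=
  2 ^ k * (Nat.choose (2 * m - 2 * k) (m - k) : ℝ) * (Nat.choose (m + k) k : ℝ) *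
    (Nat.choose k i : ℝ)

lemma bmTerm_eq_zero_of_lt {m i k : ℕ} (h : k < i) : bmTerm m i k = 0 := by
  simp [bmTerm, Nat.choose_eq_zero_of_lt h]

lemma d_natCast_eq_sum (m i : ℕ) :
    d m i = ((2 : ℝ) ^ (2 * m))⁻¹ * ∑ k ∈ range (m + 1), bmTerm m i k := by
  rw [d, Int.toNat_natCast]
  split_ifs with h
  · congr 1
    refine sum_subset (fun k hk => by simp at hk ⊢; omega) fun k hk hk' => ?_
    exact bmTerm_eq_zero_of_lt (by simp at hk hk'; omega)
  · rw [sum_eq_zero fun k hk => bmTerm_eq_zero_of_lt (by simp at hk; omega), mul_zero]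

lemma bmTerm_add_left_eq (k n i : ℕ) :
    bmTerm (k + n) i k =
      2 ^ k * (n.centralBinom : ℝ) * ((k + n + k).choose k : ℝ) * (k.choose i : ℝ) := by
  rw [bmTerm, Nat.centralBinom_eq_two_mul_choose, show 2 * (k + n) - 2 * k = 2 * n by omega,
    Nat.add_sub_cancel_left]

lemma bmTerm_succ_i (m i k : ℕ) :
    bmTerm m (i + 1) k * (i + 1) = bmTerm m i k * (k - i) := by
  unfold bmTerm
  linear_combination (2 : ℝ) ^ k * ((2 * m - 2 * k).choose (m - k) : ℝ) * ((m + k).choose k : ℝ) *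
    Nat.cast_choose_succ_right_mul (R := ℝ) k i

lemma bmTerm_succ_m (k n i : ℕ) :
    ((n : ℝ) + 1) * (k + n + 1) * bmTerm (k + n + 1) i k =
      2 * (2 * n + 1) * (2 * k + n + 1) * bmTerm (k + n) i k := by
  have hb := Nat.cast_choose_mul_succ (R := ℝ) (k + n + k) k
  rw [bmTerm_add_left_eq, add_assoc k n 1, bmTerm_add_left_eq k (n + 1),
    show k + (n + 1) + k = k + n + k + 1 by omega]
  push_cast at hb ⊢
  linear_combination (2 : ℝ) ^ k * (k + n + 1) * ((k + n + k + 1).choose k : ℝ) *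
      (k.choose i : ℝ) * Nat.cast_succ_mul_centralBinom_succ (R := ℝ) n
    - 2 ^ k * (2 * (2 * n + 1)) * (n.centralBinom : ℝ) * (k.choose i : ℝ) * hb

lemma bmTerm_succ_k (k n i : ℕ) :
    ((n : ℝ) + 1) * (2 * k + n + 2) * bmTerm (k + n + 1) i k =
      (2 * n + 1) * (k + 1 - i) * bmTerm (k + n + 1) i (k + 1) := by
  have hb : ((k + (n + 1) + k : ℕ) + 1 : ℝ) * ((k + (n + 1) + k).choose k : ℝ) =
      ((k + (n + 1) + k + 1).choose (k + 1) : ℝ) * (k + 1) := by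
    exact_mod_cast Nat.add_one_mul_choose_eq (k + (n + 1) + k) k
  have hc := Nat.cast_choose_mul_succ (R := ℝ) k i
  rw [add_right_comm k n 1, bmTerm_add_left_eq (k + 1), add_assoc k 1 n, add_comm 1 n,
    bmTerm_add_left_eq k, show k + (n + 1) + (k + 1) = k + (n + 1) + k + 1 by ring]
  push_cast at hb
  linear_combination (2 : ℝ) ^ k * (2 * k + n + 2) * ((k + (n + 1) + k).choose k : ℝ) *
      (k.choose i : ℝ) * Nat.cast_succ_mul_centralBinom_succ (R := ℝ) n
    + 2 ^ (k + 1) * (2 * n + 1) * (n.centralBinom : ℝ) * (k.choose i : ℝ) * hb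
    + 2 ^ (k + 1) * (2 * n + 1) * (n.centralBinom : ℝ) *
      ((k + (n + 1) + k + 1).choose (k + 1) : ℝ) * hc

lemma bmTerm_succ_diag (m i : ℕ) :
    ((m : ℝ) + 1 - i) * bmTerm (m + 1) i (m + 1) = 4 * (2 * m + 1) * bmTerm m i m := by
  have hm := bmTerm_succ_m m 0 i
  have hk := bmTerm_succ_k m 0 i
  simp only [add_zero, Nat.cast_zero] at hm hk
  linear_combination 2 * hm - hk

noncomputable def bmCert (m i : ℕ) : ℕ → ℝ
  | 0 => 0
  | k + 1 => ((m : ℝ) + k + 1) * bmTerm m i k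

lemma bmTerm_creative_telescoping {m i k : ℕ} (hi : 1 ≤ i) (hk : k ≤ m) :
    bmTerm m (i + 1) k - (4 * m - 2 * i + 3) * (m + i + 1) / (2 * i * (i + 1)) * bmTerm m i k
      + (m + 1 - i) * (m + 1) / (i * (i + 1)) / 4 * bmTerm (m + 1) i k
      = (m + 1) / (i * (i + 1)) * (bmCert m i k - bmCert m i (k + 1)) := by
  obtain _ | k := k
  · simp [bmCert, bmTerm_eq_zero_of_lt, Nat.lt_of_succ_le hi]
  obtain ⟨n, rfl⟩ : ∃ n, m = k + n + 1 := ⟨m - k - 1, by omega⟩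
  have hU := bmTerm_succ_i (k + n + 1) i (k + 1)
  have hV := bmTerm_succ_m (k + 1) n i
  have hT := bmTerm_succ_k k n i
  rw [show k + 1 + n = k + n + 1 by ring] at hV
  simp only [bmCert]
  generalize bmTerm (k + n + 1) (i + 1) (k + 1) = U at *
  generalize bmTerm (k + n + 1 + 1) i (k + 1) = V at *
  generalize bmTerm (k + n + 1) i k = T₀ at *
  generalize bmTerm (k + n + 1) i (k + 1) = T at *
  push_cast at *
  have hi₀ : (i : ℝ) ≠ 0 := by positivity
  replace hU : U = T * (k + 1 - i) / (i + 1) := by rw [eq_div_iff (by positivity)]; linarith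
  replace hV : V = 2 * (2 * n + 1) * (2 * k + n + 3) * T / ((n + 1) * (k + n + 2)) := by
    rw [eq_div_iff (by positivity)]; linarith
  replace hT : T₀ = (2 * n + 1) * (k + 1 - i) * T / ((n + 1) * (2 * k + n + 2)) := by
    rw [eq_div_iff (by positivity)]; linarith
  rw [hU, hV, hT]
  field_simp
  ring

lemma sum_bmTerm_recurrence {m i : ℕ} (hi : 1 ≤ i) :
    ∑ k ∈ range (m + 1), bmTerm m (i + 1) k =
      (4 * m - 2 * i + 3) * (m + i + 1) / (2 * i * (i + 1)) * ∑ k ∈ range (m + 1), bmTerm m i k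
      - (m + 1 - i) * (m + 1) / (i * (i + 1)) / 4 * ∑ k ∈ range (m + 2), bmTerm (m + 1) i k := by
  have htele := sum_congr (s₁ := range (m + 1)) rfl fun k hk =>
    bmTerm_creative_telescoping (i := i) hi (mem_range_succ_iff.mp hk)
  rw [← mul_sum, sum_range_sub', sum_add_distrib, sum_sub_distrib, ← mul_sum, ← mul_sum] at htele
  simp only [bmCert] at htele
  rw [sum_range_succ _ (m + 1)]
  linear_combination htele + (m + 1) / (i * (i + 1)) / 4 * bmTerm_succ_diag m i

theorem boros_moll_L1_general (m : ℕ) (i : ℤ) (h0 : 1 ≤ i) :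
    d m (i + 1) = (((4 * m - 2 * i + 3) * (m + i + 1) : ℝ) / (2 * i * (i + 1))) * d m i
      - (((m + 1 - i) * (m + 1) : ℝ) / (i * (i + 1))) * d (m + 1) i := by
  lift i to ℕ using by omega
  rw [show (i : ℤ) + 1 = ((i + 1 : ℕ) : ℤ) by push_cast; rfl, d_natCast_eq_sum, d_natCast_eq_sum,
    d_natCast_eq_sum, sum_bmTerm_recurrence (by exact_mod_cast h0),
    show 2 * (m + 1) = 2 * m + 2 by ring, pow_add]
  push_cast
  ring

theorem boros_moll_L1 (m : ℕ) (i : ℤ) (hm : 2 ≤ m) (h0 : 1 ≤ i) (h1 : i ≤ (m : ℤ) - 1) :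
    d m (i + 1) = (((4 * m - 2 * i + 3) * (m + i + 1) : ℝ) / (2 * i * (i + 1))) * d m i
      - (((m + 1 - i) * (m + 1) : ℝ) / (i * (i + 1))) * d (m + 1) i :=
  boros_moll_L1_general m i h0
end
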